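/- arXiv:1701.05069 — 9 statements merged into one kernel-verified Lean document; each statement's English description precedes it below -/
import Mathlib

section
/- Let E be a real Banach space, ε > 0, t₀ ≤ t₁ real numbers and set Δt = t₁ - t₀. Suppose F : ℝ → E is Lipschitz on [t₀, t₁] with Lipschitz constant L, and g : ℝ → E is differentiable on [t₀, t₁] with g'(t) = -(1/ε²)·g(t) - (1/ε)·F(t) for every t ∈ [t₀, t₁]. Then ‖g(t₁) - e^{-Δt/ε²}·g(t₀) + ε·(1 - e^{-Δt/ε²})·F(t₀)‖ ≤ L·Δt²/ε. -/
/-! For `g' = -a g - b F`, multiplying by the integrating factor `exp (a (s - t₀))` and freezing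
`F` at `t₀` gives a function `u` with `u' s = b exp (a (s - t₀)) (F t₀ - F s)`, which is `O(Δt)`
on `[t₀, t₁]` because `F` is Lipschitz. The mean value inequality then gives
`‖u t₁ - u t₀‖ = O(Δt²)`, and dividing the integrating factor back out yields the estimate;
the theorem is the case `a = 1/ε²`, `b = 1/ε`. -/

open Real Set

section IntegratingFactor

variable {E : Type*} [NormedAddCommGroup E] [NormedSpace ℝ E] {a b t₀ t₁ t : ℝ} {F g : ℝ → E}

noncomputable def integratingFactorTransform (a b t₀ : ℝ) (F g : ℝ → E) (s : ℝ) : E :=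
  exp (a * (s - t₀)) • g s + (b / a * (exp (a * (s - t₀)) - 1)) • F t₀

lemma hasDerivAt_integratingFactorTransform (ha : a ≠ 0)
    (hg : HasDerivAt g ((-a) • g t - b • F t) t) :
    HasDerivAt (integratingFactorTransform a b t₀ F g)
      ((b * exp (a * (t - t₀))) • (F t₀ - F t)) t := by
  have hexp : HasDerivAt (fun s => exp (a * (s - t₀))) (exp (a * (t - t₀)) * a) t := by
    simpa using ((hasDerivAt_id t).sub_const t₀).const_mul a |>.exp
  convert (hexp.smul hg).add (((hexp.sub_const 1).const_mul (b / a)).smul_const (F t₀)) using 1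
  · rfl
  · match_scalars <;> field_simp
    ring

lemma norm_integratingFactorTransform_sub_le (ha : 0 < a) (ht : t₀ ≤ t₁) {L : NNReal}
    (hF : LipschitzOnWith L F (Icc t₀ t₁))
    (hg : ∀ t ∈ Icc t₀ t₁, HasDerivAt g ((-a) • g t - b • F t) t) :
    ‖integratingFactorTransform a b t₀ F g t₁ - integratingFactorTransform a b t₀ F g t₀‖ ≤
      |b| * exp (a * (t₁ - t₀)) * L * (t₁ - t₀) ^ 2 := by
  have hbound : ∀ t ∈ Icc t₀ t₁, ‖(b * exp (a * (t - t₀))) • (F t₀ - F t)‖ ≤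
      |b| * exp (a * (t₁ - t₀)) * (L * (t₁ - t₀)) := by
    intro t hs
    have hexp : exp (a * (t - t₀)) ≤ exp (a * (t₁ - t₀)) := by
      gcongr
      exact hs.2
    have hLip : ‖F t₀ - F t‖ ≤ L * (t₁ - t₀) := by
      rw [← dist_eq_norm]
      refine (hF.dist_le_mul t₀ (left_mem_Icc.2 ht) t hs).trans ?_
      gcongr
      rw [dist_comm, Real.dist_eq, abs_of_nonneg (sub_nonneg.2 hs.1)]
      linarith [hs.2]
    rw [norm_smul, norm_mul, Real.norm_eq_abs, Real.norm_of_nonneg (exp_pos _).le]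
    gcongr
  have := (convex_Icc t₀ t₁).norm_image_sub_le_of_norm_hasDerivWithin_le
    (fun t hs => (hasDerivAt_integratingFactorTransform ha.ne' (hg t hs)).hasDerivWithinAt)
    hbound (left_mem_Icc.2 ht) (right_mem_Icc.2 ht)
  refine this.trans_eq ?_
  rw [Real.norm_of_nonneg (sub_nonneg.2 ht)]
  ring

lemma sub_exp_smul_add_smul_eq (ha : a ≠ 0) :
    g t₁ - exp (-(a * (t₁ - t₀))) • g t₀ + (b / a * (1 - exp (-(a * (t₁ - t₀))))) • F t₀ =
      exp (-(a * (t₁ - t₀))) •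
        (integratingFactorTransform a b t₀ F g t₁ - integratingFactorTransform a b t₀ F g t₀) := by
  simp only [integratingFactorTransform, sub_self, mul_zero, exp_zero, exp_neg]
  match_scalars <;> field_simp
  ring

lemma norm_sub_exp_smul_add_smul_le (ha : 0 < a) (ht : t₀ ≤ t₁) {L : NNReal}
    (hF : LipschitzOnWith L F (Icc t₀ t₁))
    (hg : ∀ t ∈ Icc t₀ t₁, HasDerivAt g ((-a) • g t - b • F t) t) :
    ‖g t₁ - exp (-(a * (t₁ - t₀))) • g t₀ + (b / a * (1 - exp (-(a * (t₁ - t₀))))) • F t₀‖ ≤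
      |b| * L * (t₁ - t₀) ^ 2 := by
  rw [sub_exp_smul_add_smul_eq ha.ne', norm_smul, Real.norm_of_nonneg (exp_pos _).le]
  calc _ ≤ exp (-(a * (t₁ - t₀))) * (|b| * exp (a * (t₁ - t₀)) * L * (t₁ - t₀) ^ 2) := by
        gcongr
        exact norm_integratingFactorTransform_sub_le ha ht hF hg
    _ = |b| * L * (t₁ - t₀) ^ 2 := by
        rw [exp_neg]
        field_simp

end IntegratingFactor

theorem stmt_1 {E : Type*} [NormedAddCommGroup E] [NormedSpace ℝ E]
    (ε t₀ t₁ Δt : ℝ) (hε : 0 < ε) (ht : t₀ ≤ t₁) (hΔt : Δt = t₁ - t₀)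
    (L : NNReal) (F g : ℝ → E)
    (hF : LipschitzOnWith L F (Set.Icc t₀ t₁))
    (hg : ∀ t ∈ Set.Icc t₀ t₁,
      HasDerivAt g (-(1 / ε ^ 2) • g t - (1 / ε) • F t) t) :
    ‖g t₁ - Real.exp (-Δt / ε ^ 2) • g t₀
        + (ε * (1 - Real.exp (-Δt / ε ^ 2))) • F t₀‖
      ≤ L * Δt ^ 2 / ε := by
  have key := norm_sub_exp_smul_add_smul_le (by positivity) ht hF hg
  have hexp : -(1 / ε ^ 2 * (t₁ - t₀)) = -Δt / ε ^ 2 := by rw [hΔt]; ring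
  have hcoef : 1 / ε / (1 / ε ^ 2) = ε := by field_simp
  rw [hexp, hcoef, abs_of_pos (one_div_pos.2 hε), ← hΔt] at key
  exact key.trans_eq (by ring)
end

section
/- Let E be a real Banach space, ε > 0, t₀ ≤ t₁ real numbers and set Δt = t₁ - t₀. Suppose F : ℝ → E is twice continuously differentiable on [t₀, t₁] with ‖F(s)‖ ≤ M₀, ‖F'(s)‖ ≤ M₁ and ‖F''(s)‖ ≤ M₂ for all s ∈ [t₀, t₁], and g : ℝ → E is differentiable on [t₀, t₁] with g'(t) = -(1/ε²)·g(t) - (1/ε)·F(t) for every t ∈ [t₀, t₁]. Then ‖g(t₁) - e^{-Δt/ε²}·g(t₀) + (Δt/ε)·e^{-Δt/(2ε²)}·F((t₀+t₁)/2)‖ ≤ (Δt³/(24ε))·(M₂ + 2M₁/ε² + M₀/ε⁴). -/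
/-!
With the integrating factor `w s = exp ((s - t₁) / ε²)`, the function `H = -ε • w • g` is an
antiderivative of `φ = w • F`, and the quantity to bound is `-(1/ε) • (H t₁ - H t₀ - Δt • φ m)`
with `m` the mid-point: the error of the mid-point rule for `∫ φ`, expressed through an
antiderivative so that no integral (and no completeness of `E`) is needed. That error is at most
`sup ‖φ''‖ · Δt³ / 24`: the map `u ↦ H (m + u) - H (m - u) - 2u • φ m` vanishes at `0` and its
derivative is a symmetric second difference of `φ`, of norm at most `sup ‖φ''‖ · u²`. Finally
`φ'' = w • (F'' + 2k • F' + k² • F)` with `k = 1/ε²` and `0 < w ≤ 1` on `[t₀, t₁]`.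
-/

open Set

section

variable {E : Type*} [NormedAddCommGroup E] [NormedSpace ℝ E]

theorem norm_image_le_of_norm_deriv_le_mul_pow {f f' : ℝ → E} {a b C : ℝ} (n : ℕ) (hab : a ≤ b)
    (hf : ∀ x ∈ Icc a b, HasDerivAt f (f' x) x) (ha : f a = 0)
    (bound : ∀ x ∈ Icc a b, ‖f' x‖ ≤ C * (x - a) ^ n) :
    ‖f b‖ ≤ C * (b - a) ^ (n + 1) / (n + 1) := by
  have hB : ∀ x, HasDerivAt (fun x => C * (x - a) ^ (n + 1) / (n + 1)) (C * (x - a) ^ n) x := by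
    intro x
    refine (((hasDerivAt_pow (n + 1) (x - a)).comp_sub_const x a).const_mul C).div_const
      ((n : ℝ) + 1) |>.congr_deriv ?_
    rw [Nat.add_sub_cancel]
    push_cast
    field_simp
  refine image_norm_le_of_norm_deriv_right_le_deriv_boundary
    (fun x hx => (hf x hx).continuousAt.continuousWithinAt)
    (fun x hx => (hf x (Ico_subset_Icc_self hx)).hasDerivWithinAt) (by simp [ha]) hB
    (fun x hx => bound x (Ico_subset_Icc_self hx)) (right_mem_Icc.2 hab)

theorem norm_add_sub_two_smul_le {f f' f'' : ℝ → E} {m u C : ℝ} (hu : 0 ≤ u)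
    (hf : ∀ x ∈ Icc (m - u) (m + u), HasDerivAt f (f' x) x)
    (hf' : ∀ x ∈ Icc (m - u) (m + u), HasDerivAt f' (f'' x) x)
    (bound : ∀ x ∈ Icc (m - u) (m + u), ‖f'' x‖ ≤ C) :
    ‖f (m + u) + f (m - u) - (2 : ℝ) • f m‖ ≤ C * u ^ 2 := by
  have mem : ∀ v ∈ Icc 0 u, Icc (m - v) (m + v) ⊆ Icc (m - u) (m + u) := fun v hv =>
    Icc_subset_Icc (by linarith [hv.2]) (by linarith [hv.2])
  have hderiv : ∀ v ∈ Icc 0 u, HasDerivAt (fun v => f (m + v) + f (m - v) - (2 : ℝ) • f m)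
      (f' (m + v) - f' (m - v)) v := by
    intro v hv
    have := ((hf _ (mem v hv ⟨by linarith [hv.1], le_rfl⟩)).comp_const_add m v).add
      ((hf _ (mem v hv ⟨le_rfl, by linarith [hv.1]⟩)).comp_const_sub m v)
    rw [← sub_eq_add_neg] at this
    exact this.sub_const _
  have hbound : ∀ v ∈ Icc 0 u, ‖f' (m + v) - f' (m - v)‖ ≤ 2 * C * (v - 0) ^ 1 := by
    intro v hv
    have := norm_image_sub_le_of_norm_deriv_le_segment'
      (fun x hx => (hf' x (mem v hv hx)).hasDerivWithinAt)
      (fun x hx => bound x (mem v hv (Ico_subset_Icc_self hx))) (m + v)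
      ⟨by linarith [hv.1], le_rfl⟩
    linarith
  have := norm_image_le_of_norm_deriv_le_mul_pow 1 hu hderiv (by simp; module) hbound
  norm_num at this
  linarith

theorem norm_sub_sub_smul_midpoint_le {H φ φ' φ'' : ℝ → E} {a b C : ℝ} (hab : a ≤ b)
    (hprimitive : ∀ x ∈ Icc a b, HasDerivAt H (φ x) x)
    (hφ : ∀ x ∈ Icc a b, HasDerivAt φ (φ' x) x)
    (hφ' : ∀ x ∈ Icc a b, HasDerivAt φ' (φ'' x) x)
    (bound : ∀ x ∈ Icc a b, ‖φ'' x‖ ≤ C) :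
    ‖H b - H a - (b - a) • φ ((a + b) / 2)‖ ≤ C * (b - a) ^ 3 / 24 := by
  set m := (a + b) / 2 with hm
  set d := (b - a) / 2 with hd
  have mem : ∀ u ∈ Icc 0 d, Icc (m - u) (m + u) ⊆ Icc a b := fun u hu =>
    Icc_subset_Icc (by linarith [hu.2]) (by linarith [hu.2])
  have hderiv : ∀ u ∈ Icc 0 d,
      HasDerivAt (fun u => H (m + u) - H (m - u) - (2 * u) • φ m)
        (φ (m + u) + φ (m - u) - (2 : ℝ) • φ m) u := by
    intro u hu
    have := (((hprimitive _ (mem u hu ⟨by linarith [hu.1], le_rfl⟩)).comp_const_add m u).sub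
      ((hprimitive _ (mem u hu ⟨le_rfl, by linarith [hu.1]⟩)).comp_const_sub m u)).sub
      (((hasDerivAt_id u).const_mul 2).smul_const (φ m))
    exact this.congr_deriv (by simp)
  have hbound : ∀ u ∈ Icc 0 d, ‖φ (m + u) + φ (m - u) - (2 : ℝ) • φ m‖ ≤ C * (u - 0) ^ 2 :=
    fun u hu => by
      simpa using norm_add_sub_two_smul_le hu.1 (fun x hx => hφ x (mem u hu hx))
        (fun x hx => hφ' x (mem u hu hx)) (fun x hx => bound x (mem u hu hx))
  have := norm_image_le_of_norm_deriv_le_mul_pow 2 (by linarith) hderiv (by simp) hbound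
  rw [show m + d = b by ring, show m - d = a by ring, show 2 * d = b - a by ring] at this
  convert this using 1
  ring

theorem HasDerivAt.exp_mul_sub_smul {f : ℝ → E} {f' : E} {k c x : ℝ} (hf : HasDerivAt f f' x) :
    HasDerivAt (fun t => Real.exp (k * (t - c)) • f t)
      (Real.exp (k * (x - c)) • (f' + k • f x)) x := by
  refine ((((hasDerivAt_id x).sub_const c).const_mul k).exp.smul hf).congr_deriv ?_
  simp only [id_eq, mul_one, smul_add, smul_smul]

theorem norm_exp_mul_sub_smul_add_smul_le {k c x M₀ M₁ M₂ : ℝ} {v₀ v₁ v₂ : E} (hk : 0 ≤ k)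
    (hx : x ≤ c) (h₀ : ‖v₀‖ ≤ M₀) (h₁ : ‖v₁‖ ≤ M₁) (h₂ : ‖v₂‖ ≤ M₂) :
    ‖Real.exp (k * (x - c)) • (v₂ + k • v₁ + k • (v₁ + k • v₀))‖
      ≤ M₂ + 2 * k * M₁ + k ^ 2 * M₀ := by
  have norm_add_smul_le : ∀ y z : E, ‖y + k • z‖ ≤ ‖y‖ + k * ‖z‖ := fun y z =>
    (norm_add_le _ _).trans_eq (by rw [norm_smul, Real.norm_of_nonneg hk])
  have hexp : Real.exp (k * (x - c)) ≤ 1 :=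
    Real.exp_le_one_iff.2 (mul_nonpos_of_nonneg_of_nonpos hk (by linarith))
  calc _ ≤ ‖v₂ + k • v₁ + k • (v₁ + k • v₀)‖ := by
        rw [norm_smul, Real.norm_of_nonneg (Real.exp_pos _).le]
        exact mul_le_of_le_one_left (norm_nonneg _) hexp
    _ ≤ ‖v₂ + k • v₁‖ + k * ‖v₁ + k • v₀‖ := norm_add_smul_le _ _
    _ ≤ ‖v₂‖ + k * ‖v₁‖ + k * (‖v₁‖ + k * ‖v₀‖) := by gcongr <;> exact norm_add_smul_le _ _
    _ ≤ M₂ + k * M₁ + k * (M₁ + k * M₀) := by gcongr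
    _ = M₂ + 2 * k * M₁ + k ^ 2 * M₀ := by ring

end

theorem stmt_2_general {E : Type*} [NormedAddCommGroup E] [NormedSpace ℝ E]
    (ε t₀ t₁ Δt : ℝ) (hε : 0 < ε) (ht : t₀ ≤ t₁) (hΔt : Δt = t₁ - t₀)
    (M₀ M₁ M₂ : ℝ) (F F' F'' g : ℝ → E)
    (hF' : ∀ s ∈ Set.Icc t₀ t₁, HasDerivAt F (F' s) s)
    (hF'' : ∀ s ∈ Set.Icc t₀ t₁, HasDerivAt F' (F'' s) s)
    (hM₀ : ∀ s ∈ Set.Icc t₀ t₁, ‖F s‖ ≤ M₀)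
    (hM₁ : ∀ s ∈ Set.Icc t₀ t₁, ‖F' s‖ ≤ M₁)
    (hM₂ : ∀ s ∈ Set.Icc t₀ t₁, ‖F'' s‖ ≤ M₂)
    (hg : ∀ t ∈ Set.Icc t₀ t₁,
      HasDerivAt g (-(1 / ε ^ 2) • g t - (1 / ε) • F t) t) :
    ‖g t₁ - Real.exp (-Δt / ε ^ 2) • g t₀
        + ((Δt / ε) * Real.exp (-Δt / (2 * ε ^ 2))) • F ((t₀ + t₁) / 2)‖
      ≤ (Δt ^ 3 / (24 * ε)) * (M₂ + 2 * M₁ / ε ^ 2 + M₀ / ε ^ 4) := by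
  set k := 1 / ε ^ 2 with hk
  have hk0 : 0 ≤ k := by positivity
  set w : ℝ → ℝ := fun s => Real.exp (k * (s - t₁)) with hw
  have hprimitive : ∀ s ∈ Icc t₀ t₁,
      HasDerivAt (fun s => (-ε) • (w s • g s)) (w s • F s) s := by
    intro s hs
    refine ((hg s hs).exp_mul_sub_smul.const_smul (-ε)).congr_deriv ?_
    match_scalars
    · ring
    · field_simp
      rfl
  have hφ : ∀ s ∈ Icc t₀ t₁, HasDerivAt (fun s => w s • F s) (w s • (F' s + k • F s)) s :=
    fun s hs => (hF' s hs).exp_mul_sub_smul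
  have hφ' : ∀ s ∈ Icc t₀ t₁, HasDerivAt (fun s => w s • (F' s + k • F s))
      (w s • (F'' s + k • F' s + k • (F' s + k • F s))) s :=
    fun s hs => ((hF'' s hs).add ((hF' s hs).const_smul k)).exp_mul_sub_smul
  have hbound : ∀ s ∈ Icc t₀ t₁, ‖w s • (F'' s + k • F' s + k • (F' s + k • F s))‖
      ≤ M₂ + 2 * M₁ / ε ^ 2 + M₀ / ε ^ 4 := fun s hs =>
    (norm_exp_mul_sub_smul_add_smul_le hk0 hs.2 (hM₀ s hs) (hM₁ s hs) (hM₂ s hs)).trans_eq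
      (by rw [hk]; ring)
  have hmid := norm_sub_sub_smul_midpoint_le ht hprimitive hφ hφ' hbound
  have herror : g t₁ - Real.exp (-Δt / ε ^ 2) • g t₀
        + ((Δt / ε) * Real.exp (-Δt / (2 * ε ^ 2))) • F ((t₀ + t₁) / 2)
      = (-(1 / ε)) • ((-ε) • (w t₁ • g t₁) - (-ε) • (w t₀ • g t₀)
        - (t₁ - t₀) • (w ((t₀ + t₁) / 2) • F ((t₀ + t₁) / 2))) := by
    have hw₀ : Real.exp (-Δt / ε ^ 2) = w t₀ := by rw [hw, hk, hΔt]; congr 1; ring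
    have hwₘ : Real.exp (-Δt / (2 * ε ^ 2)) = w ((t₀ + t₁) / 2) := by
      rw [hw, hk, hΔt]; congr 1; ring
    have hw₁ : w t₁ = 1 := by simp [hw]
    rw [hw₀, hwₘ, hw₁, hΔt]
    match_scalars <;> field_simp
  rw [herror, norm_smul, norm_neg, Real.norm_of_nonneg (by positivity), hΔt]
  calc _ ≤ 1 / ε * ((M₂ + 2 * M₁ / ε ^ 2 + M₀ / ε ^ 4) * (t₁ - t₀) ^ 3 / 24) :=
        mul_le_mul_of_nonneg_left hmid (by positivity)
    _ = _ := by ring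

theorem stmt_2 {E : Type*} [NormedAddCommGroup E] [NormedSpace ℝ E]
    (ε t₀ t₁ Δt : ℝ) (hε : 0 < ε) (ht : t₀ ≤ t₁) (hΔt : Δt = t₁ - t₀)
    (M₀ M₁ M₂ : ℝ) (F F' F'' g : ℝ → E)
    (hF' : ∀ s ∈ Set.Icc t₀ t₁, HasDerivAt F (F' s) s)
    (hF'' : ∀ s ∈ Set.Icc t₀ t₁, HasDerivAt F' (F'' s) s)
    (hF''c : ContinuousOn F'' (Set.Icc t₀ t₁))
    (hM₀ : ∀ s ∈ Set.Icc t₀ t₁, ‖F s‖ ≤ M₀)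
    (hM₁ : ∀ s ∈ Set.Icc t₀ t₁, ‖F' s‖ ≤ M₁)
    (hM₂ : ∀ s ∈ Set.Icc t₀ t₁, ‖F'' s‖ ≤ M₂)
    (hg : ∀ t ∈ Set.Icc t₀ t₁,
      HasDerivAt g (-(1 / ε ^ 2) • g t - (1 / ε) • F t) t) :
    ‖g t₁ - Real.exp (-Δt / ε ^ 2) • g t₀
        + ((Δt / ε) * Real.exp (-Δt / (2 * ε ^ 2))) • F ((t₀ + t₁) / 2)‖
      ≤ (Δt ^ 3 / (24 * ε)) * (M₂ + 2 * M₁ / ε ^ 2 + M₀ / ε ^ 4) :=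
  stmt_2_general ε t₀ t₁ Δt hε ht hΔt M₀ M₁ M₂ F F' F'' g hF' hF'' hM₀ hM₁ hM₂ hg
end

section
/- For all real numbers ε > 0 and Δt > 0, one has |(2/Δt)·(e^{-Δt/ε²} - 1)/(e^{-Δt/ε²} + 1) + 1/ε²| ≤ Δt²/(12·ε⁶). -/
/-!
With `u = Δt / (2 ε²)` one has `(e^{-Δt/ε²} - 1) / (e^{-Δt/ε²} + 1) = -tanh u`, so the quantity
inside the absolute value is `(2 / Δt) (u - tanh u)`. The claim is then the Taylor bound
`0 ≤ u - tanh u ≤ u³ / 3` for `u ≥ 0`, which follows by monotonicity from `tanh' = 1 - tanh²`: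
first `tanh u ≤ u`, and this makes the derivative `u² - tanh² u` of `tanh u - u + u³ / 3`
nonnegative.
-/

namespace Real

theorem hasDerivAt_tanh (x : ℝ) : HasDerivAt tanh (1 - tanh x ^ 2) x := by
  have hcosh : cosh x ≠ 0 := (cosh_pos x).ne'
  have h := (hasDerivAt_sinh x).div (hasDerivAt_cosh x) hcosh
  rw [show sinh / cosh = tanh from funext fun y => (tanh_eq_sinh_div_cosh y).symm] at h
  refine h.congr_deriv ?_
  rw [tanh_eq_sinh_div_cosh]
  field_simp

theorem tanh_nonneg {x : ℝ} (hx : 0 ≤ x) : 0 ≤ tanh x := by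
  rw [tanh_eq_sinh_div_cosh]
  exact div_nonneg (sinh_nonneg_iff.mpr hx) (cosh_pos x).le

theorem tanh_le_self {x : ℝ} (hx : 0 ≤ x) : tanh x ≤ x := by
  have hmono : Monotone fun y => y - tanh y :=
    monotone_of_hasDerivAt_nonneg (fun y => ((hasDerivAt_id y).sub (hasDerivAt_tanh y)))
      fun y => by simpa using sq_nonneg (tanh y)
  simpa using hmono hx

theorem self_sub_cube_div_three_le_tanh {x : ℝ} (hx : 0 ≤ x) : x - x ^ 3 / 3 ≤ tanh x := by
  have hderiv : ∀ y, HasDerivAt (fun y => tanh y - (y - y ^ 3 / 3)) (y ^ 2 - tanh y ^ 2) y := by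
    intro y
    refine ((hasDerivAt_tanh y).sub ((hasDerivAt_id y).sub
      ((hasDerivAt_pow 3 y).div_const 3))).congr_deriv ?_
    push_cast
    ring
  have hmono : MonotoneOn (fun y => tanh y - (y - y ^ 3 / 3)) (Set.Ici 0) := by
    refine monotoneOn_of_hasDerivWithinAt_nonneg (convex_Ici 0)
      (fun y _ => (hderiv y).continuousAt.continuousWithinAt)
      (fun y _ => (hderiv y).hasDerivWithinAt) fun y hy => ?_
    rw [interior_Ici] at hy
    have h0 := tanh_nonneg hy.le
    have h1 := tanh_le_self hy.le
    nlinarith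
  simpa using hmono Set.self_mem_Ici hx hx

theorem exp_neg_sub_one_div_exp_neg_add_one (x : ℝ) :
    (exp (-x) - 1) / (exp (-x) + 1) = -tanh (x / 2) := by
  have hx : exp (-x) = exp (-(x / 2)) ^ 2 := by rw [← exp_nat_mul]; ring_nf
  rw [tanh_eq, hx, exp_neg (x / 2)]
  field_simp
  ring

end Real

theorem stmt_6 (ε Δt : ℝ) (hε : 0 < ε) (hΔt : 0 < Δt) :
    |(2 / Δt) * ((Real.exp (-Δt / ε ^ 2) - 1) / (Real.exp (-Δt / ε ^ 2) + 1)) + 1 / ε ^ 2|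
      ≤ Δt ^ 2 / (12 * ε ^ 6) := by
  set u := Δt / (2 * ε ^ 2) with hu
  have hu0 : 0 ≤ u := by positivity
  have hrewrite : (2 / Δt) * ((Real.exp (-Δt / ε ^ 2) - 1) / (Real.exp (-Δt / ε ^ 2) + 1))
      + 1 / ε ^ 2 = (2 / Δt) * (u - Real.tanh u) := by
    rw [neg_div, Real.exp_neg_sub_one_div_exp_neg_add_one, hu]
    field_simp
    ring_nf
  have hcube : (2 / Δt) * (u ^ 3 / 3) = Δt ^ 2 / (12 * ε ^ 6) := by
    rw [hu]; field_simp; ring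
  have hgap : 0 ≤ u - Real.tanh u := sub_nonneg.mpr (Real.tanh_le_self hu0)
  rw [hrewrite, abs_of_nonneg (mul_nonneg (by positivity) hgap), ← hcube]
  gcongr
  linarith [Real.self_sub_cube_div_three_le_tanh hu0]
end

section
/- For all real numbers ε > 0 and Δt > 0, one has |(2/ε)·e^{-Δt/(2ε²)}/(e^{-Δt/ε²} + 1) - 1/ε| ≤ Δt²/(8·ε⁵). -/
/-
With `x = Δt / (2 ε²)` the coefficient is `2 e^{-x} / (ε (e^{-2x} + 1)) = 1 / (ε cosh x)`. Since
`cosh x ≤ e^{x²/2}`, one gets `1 ≥ 1 / cosh x ≥ e^{-x²/2} ≥ 1 - x²/2`, so the coefficient differs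
from `1 / ε` by at most `x² / (2 ε) = Δt² / (8 ε⁵)`.
-/

open Real

lemma Real.inv_cosh_eq_two_mul_exp_neg_div (x : ℝ) :
    (cosh x)⁻¹ = 2 * exp (-x) / (exp (-(2 * x)) + 1) := by
  have hexp : exp (-(2 * x)) = exp (-x) * exp (-x) := by rw [← exp_add]; ring_nf
  rw [cosh_eq, hexp, exp_neg]
  field_simp
  ring

lemma Real.abs_inv_cosh_sub_one_le (x : ℝ) : |(cosh x)⁻¹ - 1| ≤ x ^ 2 / 2 := by
  have hsech_le_one : (cosh x)⁻¹ ≤ 1 := inv_le_one_of_one_le₀ (one_le_cosh x)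
  have hsech_ge : exp (-(x ^ 2 / 2)) ≤ (cosh x)⁻¹ := by
    rw [exp_neg]
    exact inv_anti₀ (cosh_pos x) (cosh_le_exp_half_sq x)
  rw [abs_sub_comm, abs_of_nonneg (sub_nonneg.mpr hsech_le_one)]
  linarith [add_one_le_exp (-(x ^ 2 / 2))]

theorem stmt_7_general (ε Δt : ℝ) (hε : 0 < ε) :
    |(2 / ε) * (Real.exp (-Δt / (2 * ε ^ 2)) / (Real.exp (-Δt / ε ^ 2) + 1)) - 1 / ε|
      ≤ Δt ^ 2 / (8 * ε ^ 5) := by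
  set x := Δt / (2 * ε ^ 2) with hx
  have hcoeff : (2 / ε) * (exp (-Δt / (2 * ε ^ 2)) / (exp (-Δt / ε ^ 2) + 1)) - 1 / ε
      = ε⁻¹ * ((cosh x)⁻¹ - 1) := by
    have h1 : -Δt / (2 * ε ^ 2) = -x := by rw [hx, neg_div]
    have h2 : -Δt / ε ^ 2 = -(2 * x) := by rw [hx]; field_simp
    rw [h1, h2, inv_cosh_eq_two_mul_exp_neg_div]
    ring
  calc |(2 / ε) * (exp (-Δt / (2 * ε ^ 2)) / (exp (-Δt / ε ^ 2) + 1)) - 1 / ε|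
      = ε⁻¹ * |(cosh x)⁻¹ - 1| := by
        rw [hcoeff, abs_mul, abs_of_pos (inv_pos.mpr hε)]
    _ ≤ ε⁻¹ * (x ^ 2 / 2) := by gcongr; exact abs_inv_cosh_sub_one_le x
    _ = Δt ^ 2 / (8 * ε ^ 5) := by rw [hx]; field_simp; ring

theorem stmt_7 (ε Δt : ℝ) (hε : 0 < ε) (hΔt : 0 < Δt) :
    |(2 / ε) * (Real.exp (-Δt / (2 * ε ^ 2)) / (Real.exp (-Δt / ε ^ 2) + 1)) - 1 / ε|
      ≤ Δt ^ 2 / (8 * ε ^ 5) :=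
  stmt_7_general ε Δt hε
end

section
/- Let E be a real normed vector space, let ε > 0, Δt > 0 and A ≥ 0 be real numbers, and let (ωₙ)_{n∈ℕ} and (aₙ)_{n∈ℕ} be sequences in E with ‖aₙ‖ ≤ A for all n and ω_{n+1} = e^{-Δt/ε²}·ωₙ - ε·(1 - e^{-Δt/ε²})·aₙ for all n. Then for every n ∈ ℕ, ‖ω_{n+1} + ε·aₙ‖ ≤ (ε²/(e·Δt))·(‖ω₀‖ + 2εA). -/
theorem stmt_10 {E : Type*} [NormedAddCommGroup E] [NormedSpace ℝ E]
    (ε Δt A : ℝ) (hε : 0 < ε) (hΔt : 0 < Δt) (hA : 0 ≤ A)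
    (ω a : ℕ → E) (ha : ∀ n, ‖a n‖ ≤ A)
    (hrec : ∀ n, ω (n + 1)
      = Real.exp (-Δt / ε ^ 2) • ω n - (ε * (1 - Real.exp (-Δt / ε ^ 2))) • a n) :
    ∀ n : ℕ, ‖ω (n + 1) + ε • a n‖
      ≤ (ε ^ 2 / (Real.exp 1 * Δt)) * (‖ω 0‖ + 2 * ε * A) := by
  set q := Real.exp (-Δt / ε ^ 2) with hq
  have hqpos : 0 < q := Real.exp_pos _
  have hqlt : q < 1 := by
    rw [hq, Real.exp_lt_one_iff]
    exact div_neg_of_neg_of_pos (by linarith) (by positivity)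
  -- bound on ‖ω n‖
  have hbound : ∀ n, ‖ω n‖ ≤ ‖ω 0‖ + ε * A := by
    intro n
    induction n with
    | zero => nlinarith
    | succ n ih =>
      rw [hrec n]
      calc ‖q • ω n - (ε * (1 - q)) • a n‖
          ≤ ‖q • ω n‖ + ‖(ε * (1 - q)) • a n‖ := norm_sub_le _ _
        _ = q * ‖ω n‖ + (ε * (1 - q)) * ‖a n‖ := by
            rw [norm_smul, norm_smul, Real.norm_of_nonneg hqpos.le,
              Real.norm_of_nonneg (by nlinarith)]
        _ ≤ q * (‖ω 0‖ + ε * A) + (ε * (1 - q)) * A := by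
            have h1 : q * ‖ω n‖ ≤ q * (‖ω 0‖ + ε * A) := by
              exact mul_le_mul_of_nonneg_left ih hqpos.le
            have h2 : (ε * (1 - q)) * ‖a n‖ ≤ (ε * (1 - q)) * A :=
              mul_le_mul_of_nonneg_left (ha n) (by nlinarith)
            linarith
        _ ≤ ‖ω 0‖ + ε * A := by nlinarith [norm_nonneg (ω 0)]
  -- q ≤ ε^2 / (e * Δt)
  have hqle : q ≤ ε ^ 2 / (Real.exp 1 * Δt) := by
    have hx : (0:ℝ) < Δt / ε ^ 2 := by positivity
    have h1 : Real.exp 1 * (Δt / ε ^ 2) ≤ Real.exp (Δt / ε ^ 2) := by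
      calc Real.exp 1 * (Δt / ε ^ 2) = Real.exp 1 * Real.exp (Real.log (Δt / ε ^ 2)) := by
            rw [Real.exp_log hx]
        _ = Real.exp (1 + Real.log (Δt / ε ^ 2)) := by rw [Real.exp_add]
        _ ≤ Real.exp (Δt / ε ^ 2) := by
            apply Real.exp_le_exp.mpr
            have := Real.log_le_sub_one_of_pos hx
            linarith
    have hmul : q * Real.exp (Δt / ε ^ 2) = 1 := by
      rw [hq, ← Real.exp_add]
      ring_nf
      exact Real.exp_zero
    rw [le_div_iff₀ (by positivity)]
    have h2 : q * (Real.exp 1 * (Δt / ε ^ 2)) ≤ 1 := by nlinarith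
    calc q * (Real.exp 1 * Δt) = ε ^ 2 * (q * (Real.exp 1 * (Δt / ε ^ 2))) := by
          field_simp
      _ ≤ ε ^ 2 * 1 := by nlinarith [sq_nonneg ε]
      _ = ε ^ 2 := mul_one _
  intro n
  have key : ω (n + 1) + ε • a n = q • (ω n + ε • a n) := by
    rw [hrec n]
    module
  rw [key, norm_smul, Real.norm_of_nonneg hqpos.le]
  have h3 : ‖ω n + ε • a n‖ ≤ ‖ω 0‖ + 2 * ε * A := by
    calc ‖ω n + ε • a n‖ ≤ ‖ω n‖ + ‖ε • a n‖ := norm_add_le _ _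
      _ ≤ (‖ω 0‖ + ε * A) + ε * A := by
          have := hbound n
          rw [norm_smul, Real.norm_of_nonneg hε.le]
          have := mul_le_mul_of_nonneg_left (ha n) hε.le
          linarith
      _ = ‖ω 0‖ + 2 * ε * A := by ring
  calc q * ‖ω n + ε • a n‖ ≤ q * (‖ω 0‖ + 2 * ε * A) :=
        mul_le_mul_of_nonneg_left h3 hqpos.le
    _ ≤ (ε ^ 2 / (Real.exp 1 * Δt)) * (‖ω 0‖ + 2 * ε * A) := by
        apply mul_le_mul_of_nonneg_right hqle
        positivity
end

section
/- Let E be a real normed vector space, let Δt > 0, B ≥ 0 and W ≥ 0 be real numbers, and for each ε > 0 let (wₙ(ε))_{n∈ℕ} and (bₙ(ε))_{n∈ℕ} be sequences in E satisfying ‖w₀(ε)‖ ≤ W, ‖bₙ(ε)‖ ≤ B for all n, and w_{n+1}(ε) = (2e^{-Δt/ε²}/(e^{-Δt/ε²} + 1))·wₙ(ε) - (Δt/ε)·(e^{-Δt/(2ε²)}/(e^{-Δt/ε²} + 1))·bₙ(ε) for all n. Then for every n ≥ 1, wₙ(ε) tends to 0 as ε → 0⁺. -/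
open Real Filter Set

-- exp(-Δt/ε²) → 0 as ε → 0⁺
private lemma aux_exp_tendsto (Δt : ℝ) (hΔt : 0 < Δt) :
    Tendsto (fun ε : ℝ => Real.exp (-Δt / ε ^ 2)) (nhdsWithin 0 (Set.Ioi 0)) (nhds 0) := by
  apply Real.tendsto_exp_atBot.comp
  have h1 : Tendsto (fun ε : ℝ => (ε⁻¹) ^ 2) (nhdsWithin 0 (Set.Ioi 0)) atTop :=
    (tendsto_pow_atTop (by norm_num)).comp tendsto_inv_nhdsGT_zero
  have h2 : Tendsto (fun ε : ℝ => -Δt * (ε⁻¹) ^ 2) (nhdsWithin 0 (Set.Ioi 0)) atBot :=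
    h1.const_mul_atTop_of_neg (by linarith)
  refine h2.congr' ?_
  filter_upwards [self_mem_nhdsWithin] with ε (hε : 0 < ε)
  field_simp

-- x * exp(-c x) → 0 at atTop
private lemma aux_mul_exp (c : ℝ) (hc : 0 < c) :
    Tendsto (fun x : ℝ => x * Real.exp (-c * x)) atTop (nhds 0) := by
  have := tendsto_rpow_mul_exp_neg_mul_atTop_nhds_zero 1 c hc
  refine this.congr' ?_
  filter_upwards [eventually_gt_atTop 0] with x hx
  rw [Real.rpow_one]

-- (Δt/ε) * exp(-Δt/(2ε²)) → 0 as ε → 0⁺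
private lemma aux_beta (Δt : ℝ) (hΔt : 0 < Δt) :
    Tendsto (fun ε : ℝ => (Δt / ε) * Real.exp (-Δt / (2 * ε ^ 2)))
      (nhdsWithin 0 (Set.Ioi 0)) (nhds 0) := by
  have hx : Tendsto (fun x : ℝ => Δt * (x * Real.exp (-(Δt / 2) * x ^ 2))) atTop (nhds 0) := by
    have hbase : Tendsto (fun x : ℝ => x * Real.exp (-(Δt / 2) * x)) atTop (nhds 0) :=
      aux_mul_exp (Δt / 2) (by linarith)
    have hsq : Tendsto (fun x : ℝ => x * Real.exp (-(Δt / 2) * x ^ 2)) atTop (nhds 0) := by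
      apply squeeze_zero' ?_ ?_ hbase
      · filter_upwards [eventually_ge_atTop 0] with x hx
        positivity
      · filter_upwards [eventually_ge_atTop 1] with x hx
        have hx0 : (0:ℝ) ≤ x := by linarith
        have hle : -(Δt / 2) * x ^ 2 ≤ -(Δt / 2) * x := by nlinarith [mul_nonneg hx0 (sub_nonneg.mpr hx)]
        exact mul_le_mul_of_nonneg_left (Real.exp_le_exp.mpr hle) hx0
    simpa using hsq.const_mul Δt
  have hcomp : Tendsto (fun ε : ℝ => Δt * (ε⁻¹ * Real.exp (-(Δt / 2) * (ε⁻¹) ^ 2)))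
      (nhdsWithin 0 (Set.Ioi 0)) (nhds 0) := hx.comp tendsto_inv_nhdsGT_zero
  refine hcomp.congr' ?_
  filter_upwards [self_mem_nhdsWithin] with ε (hε : 0 < ε)
  have : -(Δt / 2) * (ε⁻¹) ^ 2 = -Δt / (2 * ε ^ 2) := by field_simp
  rw [this]; ring

theorem stmt_11 {E : Type*} [NormedAddCommGroup E] [NormedSpace ℝ E]
    (Δt B W : ℝ) (hΔt : 0 < Δt) (hB : 0 ≤ B) (hW : 0 ≤ W)
    (w b : ℝ → ℕ → E)
    (hw0 : ∀ ε : ℝ, 0 < ε → ‖w ε 0‖ ≤ W)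
    (hb : ∀ ε : ℝ, 0 < ε → ∀ n : ℕ, ‖b ε n‖ ≤ B)
    (hrec : ∀ ε : ℝ, 0 < ε → ∀ n : ℕ, w ε (n + 1)
      = (2 * Real.exp (-Δt / ε ^ 2) / (Real.exp (-Δt / ε ^ 2) + 1)) • w ε n
        - ((Δt / ε) * (Real.exp (-Δt / (2 * ε ^ 2)) / (Real.exp (-Δt / ε ^ 2) + 1))) • b ε n) :
    ∀ n : ℕ, 1 ≤ n →
      Filter.Tendsto (fun ε : ℝ => w ε n) (nhdsWithin 0 (Set.Ioi 0)) (nhds 0) := by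
  set α : ℝ → ℝ := fun ε => 2 * Real.exp (-Δt / ε ^ 2) / (Real.exp (-Δt / ε ^ 2) + 1) with hαdef
  set β : ℝ → ℝ := fun ε => (Δt / ε) * (Real.exp (-Δt / (2 * ε ^ 2)) / (Real.exp (-Δt / ε ^ 2) + 1))
    with hβdef
  have hden : ∀ ε : ℝ, (1:ℝ) ≤ Real.exp (-Δt / ε ^ 2) + 1 := fun ε => by
    have := Real.exp_pos (-Δt / ε ^ 2); linarith
  have hα_nonneg : ∀ ε : ℝ, 0 ≤ α ε := fun ε => by
    have h1 := (Real.exp_pos (-Δt / ε ^ 2)).le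
    have h2 := hden ε
    positivity
  have hα_le_one : ∀ ε : ℝ, α ε ≤ 1 := fun ε => by
    have hnp : -Δt / ε ^ 2 ≤ 0 := div_nonpos_of_nonpos_of_nonneg (by linarith) (sq_nonneg ε)
    have h1 : Real.exp (-Δt / ε ^ 2) ≤ 1 := Real.exp_le_one_iff.mpr hnp
    have h2 := hden ε
    rw [hαdef, div_le_one (by linarith)]
    linarith
  have hβ_nonneg : ∀ ε : ℝ, 0 < ε → 0 ≤ β ε := fun ε hε => by
    have h1 := (Real.exp_pos (-Δt / (2 * ε ^ 2))).le
    have h2 := hden ε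
    have : 0 ≤ Δt / ε := by positivity
    have : 0 ≤ Real.exp (-Δt / (2 * ε ^ 2)) / (Real.exp (-Δt / ε ^ 2) + 1) := by positivity
    positivity
  have hα0 : Tendsto α (nhdsWithin 0 (Set.Ioi 0)) (nhds 0) := by
    have he := aux_exp_tendsto Δt hΔt
    have : Tendsto (fun ε : ℝ => 2 * Real.exp (-Δt / ε ^ 2) / (Real.exp (-Δt / ε ^ 2) + 1))
        (nhdsWithin 0 (Set.Ioi 0)) (nhds (2 * 0 / (0 + 1))) :=
      (he.const_mul 2).div (he.add_const 1) (by norm_num)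
    simpa using this
  have hβ0 : Tendsto β (nhdsWithin 0 (Set.Ioi 0)) (nhds 0) := by
    apply squeeze_zero' ?_ ?_ (aux_beta Δt hΔt)
    · filter_upwards [self_mem_nhdsWithin] with ε (hε : 0 < ε)
      exact hβ_nonneg ε hε
    · filter_upwards [self_mem_nhdsWithin] with ε (hε : 0 < ε)
      rw [hβdef]
      have h1 := (Real.exp_pos (-Δt / (2 * ε ^ 2))).le
      have h2 := hden ε
      have h3 : 0 ≤ Δt / ε := by positivity
      calc (Δt / ε) * (Real.exp (-Δt / (2 * ε ^ 2)) / (Real.exp (-Δt / ε ^ 2) + 1))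
          ≤ (Δt / ε) * (Real.exp (-Δt / (2 * ε ^ 2)) / 1) := by
            apply mul_le_mul_of_nonneg_left _ h3
            apply div_le_div_of_nonneg_left h1 zero_lt_one
            linarith
        _ = (Δt / ε) * Real.exp (-Δt / (2 * ε ^ 2)) := by ring
  -- norm bound from recurrence
  have hbound : ∀ ε : ℝ, 0 < ε → ∀ n : ℕ,
      ‖w ε (n + 1)‖ ≤ α ε * ‖w ε n‖ + β ε * B := by
    intro ε hε n
    rw [hrec ε hε n]
    calc ‖(α ε) • w ε n - (β ε) • b ε n‖
        ≤ ‖(α ε) • w ε n‖ + ‖(β ε) • b ε n‖ := norm_sub_le _ _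
      _ = |α ε| * ‖w ε n‖ + |β ε| * ‖b ε n‖ := by
          simp [norm_smul, Real.norm_eq_abs]
      _ = α ε * ‖w ε n‖ + β ε * ‖b ε n‖ := by
          rw [abs_of_nonneg (hα_nonneg ε), abs_of_nonneg (hβ_nonneg ε hε)]
      _ ≤ α ε * ‖w ε n‖ + β ε * B :=
          add_le_add le_rfl (mul_le_mul_of_nonneg_left (hb ε hε n) (hβ_nonneg ε hε))
  -- main induction: for all n, w ε (n+1) → 0
  have main : ∀ n : ℕ, Tendsto (fun ε : ℝ => w ε (n + 1)) (nhdsWithin 0 (Set.Ioi 0)) (nhds 0) := by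
    intro n
    induction n with
    | zero =>
      apply squeeze_zero_norm' (a := fun ε => α ε * W + β ε * B)
      · filter_upwards [self_mem_nhdsWithin] with ε (hε : 0 < ε)
        calc ‖w ε (0 + 1)‖ ≤ α ε * ‖w ε 0‖ + β ε * B := hbound ε hε 0
          _ ≤ α ε * W + β ε * B :=
            add_le_add (mul_le_mul_of_nonneg_left (hw0 ε hε) (hα_nonneg ε)) le_rfl
      · have : Tendsto (fun ε => α ε * W + β ε * B) (nhdsWithin 0 (Set.Ioi 0))
            (nhds (0 * W + 0 * B)) := (hα0.mul_const W).add (hβ0.mul_const B)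
        simpa using this
    | succ m ih =>
      have ihn : Tendsto (fun ε : ℝ => ‖w ε (m + 1)‖) (nhdsWithin 0 (Set.Ioi 0)) (nhds 0) := by
        simpa using ih.norm
      apply squeeze_zero_norm' (a := fun ε => ‖w ε (m + 1)‖ + β ε * B)
      · filter_upwards [self_mem_nhdsWithin] with ε (hε : 0 < ε)
        calc ‖w ε (m + 1 + 1)‖ ≤ α ε * ‖w ε (m + 1)‖ + β ε * B := hbound ε hε (m + 1)
          _ ≤ 1 * ‖w ε (m + 1)‖ + β ε * B :=
              add_le_add (mul_le_mul_of_nonneg_right (hα_le_one ε) (norm_nonneg _)) le_rfl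
          _ = ‖w ε (m + 1)‖ + β ε * B := by ring
      · have : Tendsto (fun ε => ‖w ε (m + 1)‖ + β ε * B) (nhdsWithin 0 (Set.Ioi 0))
            (nhds (0 + 0 * B)) := ihn.add (hβ0.mul_const B)
        simpa using this
  intro n hn
  obtain ⟨m, rfl⟩ := Nat.exists_eq_add_of_le hn
  simpa [Nat.add_comm] using main m
end

section
/- Let ε > 0 and let f : ℝ × ℝ × [-1,1] → ℝ be such that f, ∂_t f and ∂_x f exist and are continuous on ℝ × ℝ × [-1,1]. Define ρ(t,x) = (1/2)·∫_{-1}^{1} f(t,x,w) dw and g(t,x,v) = f(t,x,v) - ρ(t,x). Then f satisfies ∂_t f(t,x,v) + (1/ε)·v·∂_x f(t,x,v) = (1/ε²)·(ρ(t,x) - f(t,x,v)) for all (t,x,v) if and only if the pair (ρ, g) satisfies, for all (t,x,v): (i) ∂_t ρ(t,x) + (1/ε)·∂_x[(1/2)·∫_{-1}^{1} w·g(t,x,w) dw] = 0, and (ii) ∂_t g(t,x,v) + (1/ε)·[v·∂_x ρ(t,x) + v·∂_x g(t,x,v) - (1/2)·∫_{-1}^{1} w·∂_x g(t,x,w) dw]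 = -(1/ε²)·g(t,x,v). -/
/-!
Let `K` be the residual of the kinetic equation and `⟨·⟩ = (1/2) ∫_{-1}^{1} · dw`.
Differentiating under the integral sign, and using `⟨f⟩ = ρ` and `⟨w⟩ = 0` (so that the first
moments of `g` and `∂ₓ g` are those of `f` and `∂ₓ f`), the macro equation (i) reads `⟨K⟩ = 0`
and the micro equation (ii) reads `K - ⟨K⟩ = 0`. Together these say exactly that `K = 0`.
-/

open MeasureTheory Set Function

theorem ContinuousOn.comp_fix_mid {α β γ δ : Type*} [TopologicalSpace α] [TopologicalSpace β]
    [TopologicalSpace γ] [TopologicalSpace δ] {φ : α → β → γ → δ} {s : Set γ}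
    (h : ContinuousOn (fun p : α × β × γ => φ p.1 p.2.1 p.2.2) (univ ×ˢ univ ×ˢ s)) (b : β) :
    ContinuousOn (uncurry fun a c => φ a b c) (univ ×ˢ s) :=
  h.comp (f := fun p : α × γ => (p.1, b, p.2)) (by fun_prop) fun _ hp => ⟨trivial, trivial, hp.2⟩

theorem ContinuousOn.comp_fix_fst {α β γ δ : Type*} [TopologicalSpace α] [TopologicalSpace β]
    [TopologicalSpace γ] [TopologicalSpace δ] {φ : α → β → γ → δ} {s : Set γ}
    (h : ContinuousOn (fun p : α × β × γ => φ p.1 p.2.1 p.2.2) (univ ×ˢ univ ×ˢ s)) (a : α) :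
    ContinuousOn (uncurry fun b c => φ a b c) (univ ×ˢ s) :=
  h.comp (f := fun p : β × γ => (a, p.1, p.2)) (by fun_prop) fun _ hp => ⟨trivial, trivial, hp.2⟩

theorem ContinuousOn.comp_fix_fst_mid {α β γ δ : Type*} [TopologicalSpace α]
    [TopologicalSpace β] [TopologicalSpace γ] [TopologicalSpace δ] {φ : α → β → γ → δ}
    {s : Set γ} (h : ContinuousOn (fun p : α × β × γ => φ p.1 p.2.1 p.2.2) (univ ×ˢ univ ×ˢ s))
    (a : α) (b : β) : ContinuousOn (φ a b) s :=
  (h.comp_fix_fst a).uncurry_left b (mem_univ b)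

theorem hasDerivAt_intervalIntegral_of_continuousOn {E : Type*} [NormedAddCommGroup E]
    [NormedSpace ℝ E] [CompleteSpace E] {F F' : ℝ → ℝ → E} {a b : ℝ} (hab : a ≤ b)
    (hF : ∀ s, ContinuousOn (F s) (Icc a b))
    (hF' : ContinuousOn (uncurry F') (univ ×ˢ Icc a b))
    (hd : ∀ s, ∀ w ∈ Icc a b, HasDerivAt (F · w) (F' s w) s) (t : ℝ) :
    HasDerivAt (fun s => ∫ w in a..b, F s w) (∫ w in a..b, F' t w) t := by
  have hIoc : uIoc a b ⊆ Icc a b := by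
    rw [uIoc_of_le hab]; exact Ioc_subset_Icc_self
  have hF't : ContinuousOn (F' t) (Icc a b) := hF'.uncurry_left t (mem_univ t)
  -- a bound for `F'` on the compact `[t - 1, t + 1] × [a, b]` dominates all nearby derivatives
  obtain ⟨C, hC⟩ := (isCompact_Icc.prod isCompact_Icc).exists_bound_of_continuousOn
    (hF'.mono (prod_mono (subset_univ (Icc (t - 1) (t + 1))) subset_rfl))
  refine (intervalIntegral.hasDerivAt_integral_of_dominated_loc_of_deriv_le (bound := fun _ => C)
    (Metric.ball_mem_nhds t one_pos)
    (.of_forall fun s => ((hF s).mono hIoc).aestronglyMeasurable measurableSet_uIoc)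
    ((hF t).intervalIntegrable_of_Icc hab)
    ((hF't.mono hIoc).aestronglyMeasurable measurableSet_uIoc) ?_ intervalIntegrable_const
    (ae_of_all _ fun w hw s _ => hd s w (hIoc hw))).2
  refine ae_of_all _ fun w hw s hs => hC (s, w) ⟨?_, hIoc hw⟩
  rw [Metric.mem_ball, Real.dist_eq, abs_lt] at hs
  constructor <;> linarith [hs.1, hs.2]

theorem intervalIntegral.integral_mul_sub_const_symm {h : ℝ → ℝ} {a : ℝ}
    (hh : IntervalIntegrable (fun w => w * h w) volume (-a) a) (c : ℝ) :
    ∫ w in -a..a, w * (h w - c) = ∫ w in -a..a, w * h w := by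
  simp_rw [mul_sub]
  rw [intervalIntegral.integral_sub hh (intervalIntegrable_id.mul_const c),
    intervalIntegral.integral_mul_const, integral_id]
  ring

/-- With `c = 1/2` on `[-1, 1]` this is `K = 0 ↔ Π K = 0 ∧ (I - Π) K = 0`. -/
theorem forall_mem_Icc_eq_zero_iff {K : ℝ → ℝ} {a b : ℝ} (hab : a ≤ b) (c : ℝ) :
    (∀ v ∈ Icc a b, K v = 0) ↔
      c * (∫ w in a..b, K w) = 0 ∧ ∀ v ∈ Icc a b, K v - c * ∫ w in a..b, K w = 0 := by
  constructor
  · intro hK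
    have : ∫ w in a..b, K w = 0 := by
      rw [intervalIntegral.integral_congr (g := 0) fun w hw => hK w (by rwa [uIcc_of_le hab] at hw)]
      simp
    simpa [this] using hK
  · rintro ⟨hmean, hfluct⟩ v hv
    simpa [hmean] using hfluct v hv

section MicroMacro

variable {f ft fx : ℝ → ℝ → ℝ → ℝ} {ρ : ℝ → ℝ → ℝ} {g : ℝ → ℝ → ℝ → ℝ}

noncomputable def kineticResidual (ε : ℝ) (f ft fx : ℝ → ℝ → ℝ → ℝ) (ρ : ℝ → ℝ → ℝ) (t x v : ℝ) : ℝ :=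
  ft t x v + (1 / ε) * (v * fx t x v) - (1 / ε ^ 2) * (ρ t x - f t x v)

theorem hasDerivAt_density_time
    (hft : ∀ t x : ℝ, ∀ v ∈ Icc (-1 : ℝ) 1, HasDerivAt (f · x v) (ft t x v) t)
    (hfc : ContinuousOn (fun p : ℝ × ℝ × ℝ => f p.1 p.2.1 p.2.2) (univ ×ˢ univ ×ˢ Icc (-1) 1))
    (hftc : ContinuousOn (fun p : ℝ × ℝ × ℝ => ft p.1 p.2.1 p.2.2) (univ ×ˢ univ ×ˢ Icc (-1) 1))
    (hρ : ∀ t x : ℝ, ρ t x = (1 / 2) * ∫ w in (-1 : ℝ)..1, f t x w) (t x : ℝ) :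
    HasDerivAt (ρ · x) ((1 / 2) * ∫ w in (-1 : ℝ)..1, ft t x w) t := by
  simpa only [hρ] using (hasDerivAt_intervalIntegral_of_continuousOn (by norm_num)
    (fun s => hfc.comp_fix_fst_mid s x) (hftc.comp_fix_mid x) (fun s w hw => hft s x w hw)
    t).const_mul (1 / 2)

theorem hasDerivAt_density_space
    (hfx : ∀ t x : ℝ, ∀ v ∈ Icc (-1 : ℝ) 1, HasDerivAt (f t · v) (fx t x v) x)
    (hfc : ContinuousOn (fun p : ℝ × ℝ × ℝ => f p.1 p.2.1 p.2.2) (univ ×ˢ univ ×ˢ Icc (-1) 1))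
    (hfxc : ContinuousOn (fun p : ℝ × ℝ × ℝ => fx p.1 p.2.1 p.2.2) (univ ×ˢ univ ×ˢ Icc (-1) 1))
    (hρ : ∀ t x : ℝ, ρ t x = (1 / 2) * ∫ w in (-1 : ℝ)..1, f t x w) (t x : ℝ) :
    HasDerivAt (ρ t ·) ((1 / 2) * ∫ w in (-1 : ℝ)..1, fx t x w) x := by
  simpa only [hρ] using (hasDerivAt_intervalIntegral_of_continuousOn (by norm_num)
    (fun y => hfc.comp_fix_fst_mid t y) (hfxc.comp_fix_fst t) (fun y w hw => hfx t y w hw)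
    x).const_mul (1 / 2)

theorem hasDerivAt_flux
    (hfx : ∀ t x : ℝ, ∀ v ∈ Icc (-1 : ℝ) 1, HasDerivAt (f t · v) (fx t x v) x)
    (hfc : ContinuousOn (fun p : ℝ × ℝ × ℝ => f p.1 p.2.1 p.2.2) (univ ×ˢ univ ×ˢ Icc (-1) 1))
    (hfxc : ContinuousOn (fun p : ℝ × ℝ × ℝ => fx p.1 p.2.1 p.2.2) (univ ×ˢ univ ×ˢ Icc (-1) 1))
    (hg : ∀ t x v : ℝ, g t x v = f t x v - ρ t x) (t x : ℝ) :
    HasDerivAt (fun y => (1 / 2) * ∫ w in (-1 : ℝ)..1, w * g t y w)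
      ((1 / 2) * ∫ w in (-1 : ℝ)..1, w * fx t x w) x := by
  simp only [hg, intervalIntegral.integral_mul_sub_const_symm
    ((continuousOn_id.mul (hfc.comp_fix_fst_mid t _)).intervalIntegrable_of_Icc (by norm_num))]
  exact (hasDerivAt_intervalIntegral_of_continuousOn (by norm_num)
    (F' := fun y w => w * fx t y w) (fun y => continuousOn_id.mul (hfc.comp_fix_fst_mid t y))
    (continuous_snd.continuousOn.mul (hfxc.comp_fix_fst t))
    (fun y w hw => (hfx t y w hw).const_mul w) x).const_mul (1 / 2)

theorem integral_mul_deriv_micro_space (hfxc : ContinuousOn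
      (fun p : ℝ × ℝ × ℝ => fx p.1 p.2.1 p.2.2) (univ ×ˢ univ ×ˢ Icc (-1) 1))
    (hgx : ∀ t x : ℝ, ∀ v ∈ Icc (-1 : ℝ) 1,
      HasDerivAt (g t · v) (fx t x v - (1 / 2) * ∫ w in (-1 : ℝ)..1, fx t x w) x) (t x : ℝ) :
    ∫ w in (-1 : ℝ)..1, w * deriv (g t · w) x = ∫ w in (-1 : ℝ)..1, w * fx t x w := by
  rw [intervalIntegral.integral_congr
    (g := fun w => w * (fx t x w - (1 / 2) * ∫ u in (-1 : ℝ)..1, fx t x u)) fun w hw => by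
      rw [uIcc_of_le (by norm_num)] at hw
      simp only [(hgx t x w hw).deriv]]
  exact intervalIntegral.integral_mul_sub_const_symm
    ((continuousOn_id.mul (hfxc.comp_fix_fst_mid t x)).intervalIntegrable_of_Icc (by norm_num)) _

theorem half_integral_kineticResidual (ε : ℝ)
    (hfc : ContinuousOn (fun p : ℝ × ℝ × ℝ => f p.1 p.2.1 p.2.2) (univ ×ˢ univ ×ˢ Icc (-1) 1))
    (hftc : ContinuousOn (fun p : ℝ × ℝ × ℝ => ft p.1 p.2.1 p.2.2) (univ ×ˢ univ ×ˢ Icc (-1) 1))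
    (hfxc : ContinuousOn (fun p : ℝ × ℝ × ℝ => fx p.1 p.2.1 p.2.2) (univ ×ˢ univ ×ˢ Icc (-1) 1))
    (hρ : ∀ t x : ℝ, ρ t x = (1 / 2) * ∫ w in (-1 : ℝ)..1, f t x w) (t x : ℝ) :
    (1 / 2) * ∫ v in (-1 : ℝ)..1, kineticResidual ε f ft fx ρ t x v
      = (1 / 2) * (∫ w in (-1 : ℝ)..1, ft t x w)
        + (1 / ε) * ((1 / 2) * ∫ w in (-1 : ℝ)..1, w * fx t x w) := by
  have hI : (-1 : ℝ) ≤ 1 := by norm_num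
  have hft_int : IntervalIntegrable (ft t x) volume (-1) 1 :=
    (hftc.comp_fix_fst_mid t x).intervalIntegrable_of_Icc hI
  have hwfx_int : IntervalIntegrable (fun w => w * fx t x w) volume (-1) 1 :=
    (continuousOn_id.mul (hfxc.comp_fix_fst_mid t x)).intervalIntegrable_of_Icc hI
  have hf_int : IntervalIntegrable (f t x) volume (-1) 1 :=
    (hfc.comp_fix_fst_mid t x).intervalIntegrable_of_Icc hI
  simp only [kineticResidual]
  rw [intervalIntegral.integral_sub (hft_int.add (hwfx_int.const_mul _))
      (((intervalIntegrable_const (μ := volume)).sub hf_int).const_mul _),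
    intervalIntegral.integral_add hft_int (hwfx_int.const_mul _),
    intervalIntegral.integral_const_mul, intervalIntegral.integral_const_mul,
    intervalIntegral.integral_sub intervalIntegrable_const hf_int,
    intervalIntegral.integral_const, smul_eq_mul]
  linear_combination (-(1 / ε ^ 2)) * hρ t x

theorem kinetic_iff_micro_macro (ε : ℝ)
    (hft : ∀ t x : ℝ, ∀ v ∈ Icc (-1 : ℝ) 1, HasDerivAt (f · x v) (ft t x v) t)
    (hfx : ∀ t x : ℝ, ∀ v ∈ Icc (-1 : ℝ) 1, HasDerivAt (f t · v) (fx t x v) x)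
    (hfc : ContinuousOn (fun p : ℝ × ℝ × ℝ => f p.1 p.2.1 p.2.2) (univ ×ˢ univ ×ˢ Icc (-1) 1))
    (hftc : ContinuousOn (fun p : ℝ × ℝ × ℝ => ft p.1 p.2.1 p.2.2) (univ ×ˢ univ ×ˢ Icc (-1) 1))
    (hfxc : ContinuousOn (fun p : ℝ × ℝ × ℝ => fx p.1 p.2.1 p.2.2) (univ ×ˢ univ ×ˢ Icc (-1) 1))
    (hρ : ∀ t x : ℝ, ρ t x = (1 / 2) * ∫ w in (-1 : ℝ)..1, f t x w)
    (hg : ∀ t x v : ℝ, g t x v = f t x v - ρ t x) (t x : ℝ) :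
    (∀ v ∈ Icc (-1 : ℝ) 1,
      ft t x v + (1 / ε) * (v * fx t x v) = (1 / ε ^ 2) * (ρ t x - f t x v))
    ↔ (deriv (fun s => ρ s x) t
          + (1 / ε) * deriv (fun y => (1 / 2) * ∫ w in (-1 : ℝ)..1, w * g t y w) x = 0
      ∧ ∀ v ∈ Icc (-1 : ℝ) 1,
        deriv (fun s => g s x v) t
          + (1 / ε) * (v * deriv (fun y => ρ t y) x + v * deriv (fun y => g t y v) x
            - (1 / 2) * ∫ w in (-1 : ℝ)..1, w * deriv (fun y => g t y w) x)
        = -(1 / ε ^ 2) * g t x v) := by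
  have hρt := hasDerivAt_density_time hft hfc hftc hρ
  have hρx := hasDerivAt_density_space hfx hfc hfxc hρ
  have hgt (t x v) (hv : v ∈ Icc (-1 : ℝ) 1) :
      HasDerivAt (g · x v) (ft t x v - (1 / 2) * ∫ w in (-1 : ℝ)..1, ft t x w) t := by
    simp only [hg]; exact (hft t x v hv).sub (hρt t x)
  have hgx (t x v) (hv : v ∈ Icc (-1 : ℝ) 1) :
      HasDerivAt (g t · v) (fx t x v - (1 / 2) * ∫ w in (-1 : ℝ)..1, fx t x w) x := by
    simp only [hg]; exact (hfx t x v hv).sub (hρx t x)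
  have hmean := half_integral_kineticResidual ε hfc hftc hfxc hρ t x
  refine (forall₂_congr fun v _ => sub_eq_zero.symm).trans
    ((forall_mem_Icc_eq_zero_iff (K := kineticResidual ε f ft fx ρ t x) (by norm_num)
      (1 / 2)).trans (and_congr ?_ (forall₂_congr fun v hv => ?_)))
  · rw [hmean, (hρt t x).deriv, (hasDerivAt_flux hfx hfc hfxc hg t x).deriv]
  · rw [hmean, (hgt t x v hv).deriv, (hρx t x).deriv, (hgx t x v hv).deriv,
      integral_mul_deriv_micro_space hfxc hgx, hg, kineticResidual]
    constructor <;> intro h <;> linear_combination h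

end MicroMacro

theorem stmt_13_general (ε : ℝ)
    (f ft fx : ℝ → ℝ → ℝ → ℝ)
    (hft : ∀ t x : ℝ, ∀ v ∈ Set.Icc (-1 : ℝ) 1,
      HasDerivAt (fun s => f s x v) (ft t x v) t)
    (hfx : ∀ t x : ℝ, ∀ v ∈ Set.Icc (-1 : ℝ) 1,
      HasDerivAt (fun y => f t y v) (fx t x v) x)
    (hfc : ContinuousOn (fun p : ℝ × ℝ × ℝ => f p.1 p.2.1 p.2.2)
      (Set.univ ×ˢ Set.univ ×ˢ Set.Icc (-1 : ℝ) 1))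
    (hftc : ContinuousOn (fun p : ℝ × ℝ × ℝ => ft p.1 p.2.1 p.2.2)
      (Set.univ ×ˢ Set.univ ×ˢ Set.Icc (-1 : ℝ) 1))
    (hfxc : ContinuousOn (fun p : ℝ × ℝ × ℝ => fx p.1 p.2.1 p.2.2)
      (Set.univ ×ˢ Set.univ ×ˢ Set.Icc (-1 : ℝ) 1))
    (ρ : ℝ → ℝ → ℝ) (g : ℝ → ℝ → ℝ → ℝ)
    (hρ : ∀ t x : ℝ, ρ t x = (1 / 2) * ∫ w in (-1 : ℝ)..1, f t x w)
    (hg : ∀ t x v : ℝ, g t x v = f t x v - ρ t x) :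
    (∀ t x : ℝ, ∀ v ∈ Set.Icc (-1 : ℝ) 1,
      ft t x v + (1 / ε) * (v * fx t x v) = (1 / ε ^ 2) * (ρ t x - f t x v))
    ↔ ((∀ t x : ℝ,
          deriv (fun s => ρ s x) t
            + (1 / ε) * deriv (fun y => (1 / 2) * ∫ w in (-1 : ℝ)..1, w * g t y w) x = 0)
        ∧ (∀ t x : ℝ, ∀ v ∈ Set.Icc (-1 : ℝ) 1,
          deriv (fun s => g s x v) t
            + (1 / ε) * (v * deriv (fun y => ρ t y) x + v * deriv (fun y => g t y v) x
              - (1 / 2) * ∫ w in (-1 : ℝ)..1, w * deriv (fun y => g t y w) x)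
          = -(1 / ε ^ 2) * g t x v)) := by
  simp only [kinetic_iff_micro_macro ε hft hfx hfc hftc hfxc hρ hg, forall_and]

theorem stmt_13 (ε : ℝ) (hε : 0 < ε)
    (f ft fx : ℝ → ℝ → ℝ → ℝ)
    (hft : ∀ t x : ℝ, ∀ v ∈ Set.Icc (-1 : ℝ) 1,
      HasDerivAt (fun s => f s x v) (ft t x v) t)
    (hfx : ∀ t x : ℝ, ∀ v ∈ Set.Icc (-1 : ℝ) 1,
      HasDerivAt (fun y => f t y v) (fx t x v) x)
    (hfc : ContinuousOn (fun p : ℝ × ℝ × ℝ => f p.1 p.2.1 p.2.2)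
      (Set.univ ×ˢ Set.univ ×ˢ Set.Icc (-1 : ℝ) 1))
    (hftc : ContinuousOn (fun p : ℝ × ℝ × ℝ => ft p.1 p.2.1 p.2.2)
      (Set.univ ×ˢ Set.univ ×ˢ Set.Icc (-1 : ℝ) 1))
    (hfxc : ContinuousOn (fun p : ℝ × ℝ × ℝ => fx p.1 p.2.1 p.2.2)
      (Set.univ ×ˢ Set.univ ×ˢ Set.Icc (-1 : ℝ) 1))
    (ρ : ℝ → ℝ → ℝ) (g : ℝ → ℝ → ℝ → ℝ)
    (hρ : ∀ t x : ℝ, ρ t x = (1 / 2) * ∫ w in (-1 : ℝ)..1, f t x w)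
    (hg : ∀ t x v : ℝ, g t x v = f t x v - ρ t x) :
    (∀ t x : ℝ, ∀ v ∈ Set.Icc (-1 : ℝ) 1,
      ft t x v + (1 / ε) * (v * fx t x v) = (1 / ε ^ 2) * (ρ t x - f t x v))
    ↔ ((∀ t x : ℝ,
          deriv (fun s => ρ s x) t
            + (1 / ε) * deriv (fun y => (1 / 2) * ∫ w in (-1 : ℝ)..1, w * g t y w) x = 0)
        ∧ (∀ t x : ℝ, ∀ v ∈ Set.Icc (-1 : ℝ) 1,
          deriv (fun s => g s x v) t
            + (1 / ε) * (v * deriv (fun y => ρ t y) x + v * deriv (fun y => g t y v) x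
              - (1 / 2) * ∫ w in (-1 : ℝ)..1, w * deriv (fun y => g t y w) x)
          = -(1 / ε ^ 2) * g t x v)) :=
  stmt_13_general ε f ft fx hft hfx hfc hftc hfxc ρ g hρ hg
end

section
/- Let N ≥ 1 be an integer, let J be a finite index set, let ε > 0, Δt > 0, Δx > 0, Δv > 0 be real numbers, let (v_j)_{j∈J} be real numbers, and let ρ : ZMod N → ℝ. Define G : ZMod N × J → ℝ by G(i,j) = -ε·v_j·(ρ(i+1) - ρ(i))/Δx. Then for every i ∈ ZMod N, ρ(i) - (Δt/ε)·∑_{j∈J} v_j·((G(i,j) - G(i-1,j))/Δx)·Δv = ρ(i) + Δt·(∑_{j∈J} v_j²·Δv)·(ρ(i+1) - 2ρ(i) + ρ(i-1))/Δx². -/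
theorem stmt_16 (N : ℕ) (hN : 1 ≤ N) (J : Type*) [Fintype J]
    (ε Δt Δx Δv : ℝ) (hε : 0 < ε) (hΔt : 0 < Δt) (hΔx : 0 < Δx) (hΔv : 0 < Δv)
    (v : J → ℝ) (ρ : ZMod N → ℝ) (G : ZMod N × J → ℝ)
    (hG : ∀ (i : ZMod N) (j : J), G (i, j) = -ε * v j * (ρ (i + 1) - ρ i) / Δx) :
    ∀ i : ZMod N,
      ρ i - (Δt / ε) * ∑ j : J, v j * ((G (i, j) - G (i - 1, j)) / Δx) * Δv
        = ρ i + Δt * (∑ j : J, v j ^ 2 * Δv)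
            * (ρ (i + 1) - 2 * ρ i + ρ (i - 1)) / Δx ^ 2 := by
  intro i
  have key : ∀ j : J, v j * ((G (i, j) - G (i - 1, j)) / Δx) * Δv
      = -ε * (v j ^ 2 * Δv) * (ρ (i + 1) - 2 * ρ i + ρ (i - 1)) / Δx ^ 2 := by
    intro j
    rw [hG, hG]
    have : i - 1 + 1 = i := by ring
    rw [this]
    field_simp
    ring
  rw [Finset.sum_congr rfl (fun j _ => key j), ← Finset.sum_div,
    ← Finset.sum_mul, ← Finset.sum_mul, ← Finset.mul_sum]
  simp only [← Finset.sum_mul]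
  field_simp
  ring
end

section
/- Let E be a real normed vector space, let ε > 0, Δt > 0, β ≥ 0 and C ≥ 0 be real numbers, let B : E → E be a linear map with ‖B u‖ ≤ β·‖u‖ for all u ∈ E, and let (ωₙ)_{n∈ℕ} and (cₙ)_{n∈ℕ} be sequences in E with ‖cₙ‖ ≤ C for all n and ω_{n+1} = e^{-Δt/ε²}·ωₙ - ε·(1 - e^{-Δt/ε²})·(cₙ + B ωₙ) for all n. If q := e^{-Δt/ε²} + ε·β < 1, then for every n ∈ ℕ, ‖ωₙ‖ ≤ qⁿ·‖ω₀‖ + ε·C/(1 - q). -/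
theorem stmt_19 {E : Type*} [NormedAddCommGroup E] [NormedSpace ℝ E]
    (ε Δt β C : ℝ) (hε : 0 < ε) (hΔt : 0 < Δt) (hβ : 0 ≤ β) (hC : 0 ≤ C)
    (B : E →ₗ[ℝ] E) (hB : ∀ u : E, ‖B u‖ ≤ β * ‖u‖)
    (ω c : ℕ → E) (hc : ∀ n, ‖c n‖ ≤ C)
    (hrec : ∀ n, ω (n + 1)
      = Real.exp (-Δt / ε ^ 2) • ω n
        - (ε * (1 - Real.exp (-Δt / ε ^ 2))) • (c n + B (ω n)))
    (q : ℝ) (hq : q = Real.exp (-Δt / ε ^ 2) + ε * β) (hq1 : q < 1) :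
    ∀ n : ℕ, ‖ω n‖ ≤ q ^ n * ‖ω 0‖ + ε * C / (1 - q) := by
  set e := Real.exp (-Δt / ε ^ 2) with he
  have hepos : 0 < e := Real.exp_pos _
  have hele : e ≤ 1 := by
    apply Real.exp_le_one_iff.mpr
    have h2 : 0 < ε ^ 2 := by positivity
    have : -Δt / ε ^ 2 < 0 := div_neg_of_neg_of_pos (by linarith) h2
    linarith
  have hqpos : 0 < q := by rw [hq]; positivity
  have h1q : 0 < 1 - q := by linarith
  have key : ∀ n, ‖ω (n + 1)‖ ≤ q * ‖ω n‖ + ε * C := by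
    intro n
    rw [hrec n]
    have h4 : 0 ≤ 1 - e := by linarith
    have h5 : 0 ≤ ‖ω n‖ := norm_nonneg _
    have h2 : ‖B (ω n)‖ ≤ β * ‖ω n‖ := hB _
    have h3 : ‖c n‖ ≤ C := hc n
    have h1 : ‖e • ω n - (ε * (1 - e)) • (c n + B (ω n))‖
        ≤ e * ‖ω n‖ + (ε * (1 - e)) * (‖c n‖ + ‖B (ω n)‖) := by
      calc ‖e • ω n - (ε * (1 - e)) • (c n + B (ω n))‖
          ≤ ‖e • ω n‖ + ‖(ε * (1 - e)) • (c n + B (ω n))‖ := norm_sub_le _ _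
        _ = e * ‖ω n‖ + (ε * (1 - e)) * ‖c n + B (ω n)‖ := by
            rw [norm_smul, norm_smul, Real.norm_eq_abs, Real.norm_eq_abs,
              abs_of_pos hepos, abs_of_nonneg (by positivity)]
        _ ≤ e * ‖ω n‖ + (ε * (1 - e)) * (‖c n‖ + ‖B (ω n)‖) := by
            have := mul_le_mul_of_nonneg_left (norm_add_le (c n) (B (ω n)))
              (show (0:ℝ) ≤ ε * (1 - e) by positivity)
            linarith
    have h6 : (ε * (1 - e)) * (‖c n‖ + ‖B (ω n)‖) ≤ ε * C + ε * β * ‖ω n‖ := by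
      calc (ε * (1 - e)) * (‖c n‖ + ‖B (ω n)‖)
          ≤ (ε * (1 - e)) * (C + β * ‖ω n‖) := by gcongr
        _ ≤ (ε * 1) * (C + β * ‖ω n‖) := by
            have : 0 ≤ C + β * ‖ω n‖ := by positivity
            gcongr; linarith
        _ = ε * C + ε * β * ‖ω n‖ := by ring
    rw [hq]
    nlinarith [h1, h6]
  intro n
  induction n with
  | zero => simp; positivity
  | succ n ih =>
    calc ‖ω (n + 1)‖ ≤ q * ‖ω n‖ + ε * C := key n
      _ ≤ q * (q ^ n * ‖ω 0‖ + ε * C / (1 - q)) + ε * C := by gcongr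
      _ = q ^ (n + 1) * ‖ω 0‖ + (q * (ε * C / (1 - q)) + ε * C) := by ring
      _ ≤ q ^ (n + 1) * ‖ω 0‖ + ε * C / (1 - q) := by
          have h : q * (ε * C / (1 - q)) + ε * C = ε * C / (1 - q) := by
            field_simp; ring
          rw [h]
end
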